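/- arXiv:1510.00909 — 2 statements merged into one kernel-verified Lean document; each statement's English description precedes it below -/
import Mathlib

section
/- For the multiple exponent q = (2,1,2,...,2) (with m entries, m ≥ 2), the optimal constant C of the real mixed (ℓ₁,ℓ₂)-Littlewood inequality — i.e., the least C such that (Σ_{j₁=1}^n (Σ_{j₂=1}^n (Σ_{j₃,...,j_m=1}^n |T(e_{j₁},...,e_{j_m})|²)^{1/2})²)^{1/2} ≤ C‖T‖ for all real m-linear forms T on (ℓ∞ⁿ)^m and all n — equals 2^{(m-1)/2}. -/
/-
Upper bound. By Minkowski's inequality in `ℓ₂`, the left-hand side is at most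
`∑_{j₂} ‖(T(e_{j₁}, e_{j₂}, e_v))_{j₁, v}‖₂`. For fixed `j₂` this is the coefficient vector of
the `(m-1)`-linear form `T(·, e_{j₂}, ·, …, ·)`, and the multilinear Khintchine inequality, with
Szarek's sharp constant `√2` in each variable, bounds it by `2^{(m-1)/2}` times the average of
`|T(ε¹, e_{j₂}, ε³, …, εᵐ)|` over sign vectors `εˢ`. Summing over `j₂` and choosing the signs
of the second argument gives `‖T‖`. Szarek's inequality `‖a‖₂ ≤ √2 𝔼|∑ aᵢεᵢ|` comes from the
Poincaré inequality on the cube, which for even functions such as `|∑ aᵢεᵢ|` holds with half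
the usual constant because their Fourier weight sits on level `0` and on levels `≥ 2`.

Lower bound. Take `n = 2^{m-1}`, label the coordinates of the second variable by sign patterns
`b ∈ {±1}^{m-1}`, and let `L(x) = ∑_b x²_b ∏_s (xˢ₁ + b_s xˢ₂)` (`s` ranging over the other
variables). Since `|a + c| + |a - c| ≤ 2` on the unit square, `‖L‖ ≤ 2^{m-1}`, while the
coefficients of `L` are `±1` on `{1,2} × [n] × {1,2}^{m-2}`, so its mixed norm is
`n · 2^{(m-1)/2}`.
-/

/-- The canonical basis vectors of `ℝⁿ`. -/
def e (n : ℕ) (j : Fin n) : Fin n → ℝ := fun i => if i = j then 1 else 0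

/-- The supremum norm of an `m`-linear form on `(ℓ∞ⁿ)^m`. -/
noncomputable def supNorm (m n : ℕ)
    (T : MultilinearMap ℝ (fun _ : Fin m => (Fin n → ℝ)) ℝ) : ℝ :=
  sSup {v : ℝ | ∃ x : Fin m → Fin n → ℝ, (∀ i, ‖x i‖ ≤ 1) ∧ v = |T x|}

open Finset
open scoped BigOperators

namespace BooleanCube

lemma cast_mul_self (u : ℤˣ) : ((u : ℤ) : ℝ) * (u : ℤ) = 1 := by
  rcases Int.units_eq_one_or u with rfl | rfl <;> norm_num

lemma abs_cast (u : ℤˣ) : |((u : ℤ) : ℝ)| = 1 := by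
  rcases Int.units_eq_one_or u with rfl | rfl <;> norm_num

variable {ι : Type*}

def walsh (s : Finset ι) (ε : ι → ℤˣ) : ℝ := ∏ i ∈ s, ((ε i : ℤ) : ℝ)

lemma walsh_mul (s : Finset ι) (ε δ : ι → ℤˣ) :
    walsh s (ε * δ) = walsh s ε * walsh s δ := by
  simp [walsh, prod_mul_distrib]

lemma walsh_mul_self (s : Finset ι) (ε : ι → ℤˣ) : walsh s ε * walsh s ε = 1 := by
  rw [walsh, ← prod_mul_distrib, prod_eq_one fun i _ => cast_mul_self (ε i)]

lemma walsh_neg_one (s : Finset ι) : walsh s (-1) = (-1) ^ #s := by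
  simp [walsh]

lemma sum_walsh [Fintype ι] (ε : ι → ℤˣ) :
    ∑ s, walsh s ε = if ε = 1 then 2 ^ Fintype.card ι else 0 := by
  have h : ∑ s, walsh s ε = ∏ i, (1 + ((ε i : ℤ) : ℝ)) := by
    rw [prod_one_add, powerset_univ]; rfl
  rw [h]
  split_ifs with hε
  · simp [hε, one_add_one_eq_two]
  · obtain ⟨i, hi⟩ := Function.ne_iff.mp hε
    refine prod_eq_zero (mem_univ i) ?_
    rcases Int.units_eq_one_or (ε i) with h1 | h1
    · exact absurd h1 hi
    · simp [h1]

variable [DecidableEq ι]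

def flip (i : ι) : ι → ℤˣ := Pi.mulSingle i (-1)

lemma cast_mul_flip_apply (ε : ι → ℤˣ) (i j : ι) :
    (((ε * flip i) j : ℤ) : ℝ) =
      if j = i then -((ε j : ℤ) : ℝ) else ((ε j : ℤ) : ℝ) := by
  by_cases h : j = i
  · subst h; simp [flip]
  · simp [flip, h]

lemma walsh_flip (s : Finset ι) (i : ι) : walsh s (flip i) = if i ∈ s then -1 else 1 := by
  by_cases h : i ∈ s <;> simp [walsh, flip, Pi.mulSingle_apply, apply_ite, prod_ite_eq', h]

variable [Fintype ι]

lemma expect_cast_mul_cast (i j : ι) :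
    𝔼 ε : ι → ℤˣ, ((ε i : ℤ) : ℝ) * (ε j : ℤ) = if i = j then 1 else 0 := by
  split_ifs with h
  · simp [h, cast_mul_self]
  · have := Fintype.expect_equiv (Equiv.mulRight (flip i))
      (fun ε : ι → ℤˣ => ((ε i : ℤ) : ℝ) * (ε j : ℤ))
      (fun ε => -(((ε i : ℤ) : ℝ) * (ε j : ℤ))) fun ε => by
        simp only [Equiv.coe_mulRight, cast_mul_flip_apply, if_neg (Ne.symm h), ↓reduceIte]
        ring
    rw [expect_neg_distrib] at this
    linarith

noncomputable def fourier (f : (ι → ℤˣ) → ℝ) (s : Finset ι) : ℝ :=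
  𝔼 ε, f ε * walsh s ε

lemma fourier_empty (f : (ι → ℤˣ) → ℝ) : fourier f ∅ = 𝔼 ε, f ε := by
  simp [fourier, walsh]

lemma fourier_sub (f g : (ι → ℤˣ) → ℝ) (s : Finset ι) :
    fourier (fun ε => f ε - g ε) s = fourier f s - fourier g s := by
  simp only [fourier, sub_mul, expect_sub_distrib]

lemma fourier_comp_mul_right (f : (ι → ℤˣ) → ℝ) (γ : ι → ℤˣ) (s : Finset ι) :
    fourier (fun ε => f (ε * γ)) s = walsh s γ * fourier f s := by
  rw [fourier, fourier, mul_expect]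
  refine Fintype.expect_equiv (Equiv.mulRight γ) _ _ fun ε => ?_
  simp only [Equiv.coe_mulRight, walsh_mul]
  linear_combination -(f (ε * γ) * walsh s ε) * walsh_mul_self s γ

lemma sum_sq_fourier (f : (ι → ℤˣ) → ℝ) : ∑ s, fourier f s ^ 2 = 𝔼 ε, f ε ^ 2 := by
  have h : ∀ s, fourier f s ^ 2 = 𝔼 ε, 𝔼 δ, f ε * f δ * walsh s (ε * δ) := by
    intro s
    rw [fourier, sq, expect_mul_expect]
    simp only [walsh_mul]
    exact expect_congr rfl fun ε _ => expect_congr rfl fun δ _ => by ring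
  simp_rw [h]
  rw [← expect_sum_comm]
  refine expect_congr rfl fun ε _ => ?_
  rw [← expect_sum_comm]
  simp_rw [← mul_sum, sum_walsh, mul_ite, mul_zero]
  have hinv : ∀ δ : ι → ℤˣ, ε * δ = 1 ↔ ε = δ := fun δ => by
    rw [mul_eq_one_iff_eq_inv, show δ⁻¹ = δ from funext fun i => Int.units_inv_eq_self _]
  simp_rw [hinv]
  rw [Fintype.expect_ite_eq, NNRat.smul_def]
  push_cast [Fintype.card_fun, Fintype.card_units_int]
  field_simp

lemma fourier_sub_comp_flip (f : (ι → ℤˣ) → ℝ) (i : ι) (s : Finset ι) :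
    fourier (fun ε => f ε - f (ε * flip i)) s = if i ∈ s then 2 * fourier f s else 0 := by
  rw [fourier_sub, fourier_comp_mul_right, walsh_flip]
  split_ifs <;> ring

lemma fourier_eq_zero_of_even {f : (ι → ℤˣ) → ℝ} (hf : ∀ ε, f (-ε) = f ε)
    {s : Finset ι} (hs : Odd #s) : fourier f s = 0 := by
  have h := fourier_comp_mul_right f (-1) s
  simp only [mul_neg_one, hf, walsh_neg_one, hs.neg_one_pow] at h
  linarith

theorem poincare_of_even {f : (ι → ℤˣ) → ℝ} (hf : ∀ ε, f (-ε) = f ε) :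
    8 * (𝔼 ε, f ε ^ 2 - (𝔼 ε, f ε) ^ 2)
      ≤ ∑ i, 𝔼 ε, (f ε - f (ε * flip i)) ^ 2 := by
  have hgrad : ∑ i, 𝔼 ε, (f ε - f (ε * flip i)) ^ 2 = ∑ s, 4 * #s * fourier f s ^ 2 := by
    simp_rw [← sum_sq_fourier, fourier_sub_comp_flip]
    rw [sum_comm]
    refine sum_congr rfl fun s _ => ?_
    simp only [ite_pow, ne_eq, OfNat.ofNat_ne_zero, not_false_eq_true, zero_pow, sum_ite_mem,
      univ_inter, sum_const, nsmul_eq_mul]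
    ring
  have hterm : ∀ s : Finset ι,
      8 * fourier f s ^ 2
        ≤ 4 * #s * fourier f s ^ 2 + if s = ∅ then 8 * fourier f s ^ 2 else 0 := by
    intro s
    rcases Nat.even_or_odd #s with ⟨k, hk⟩ | hs
    · split_ifs with h
      · simp [h]
      · have h0 : #s ≠ 0 := card_ne_zero.mpr (nonempty_iff_ne_empty.mpr h)
        have : (2 : ℝ) ≤ #s := by exact_mod_cast (by omega : 2 ≤ #s)
        nlinarith [sq_nonneg (fourier f s)]
    · simp [fourier_eq_zero_of_even hf hs]
  have := sum_le_sum fun s (_ : s ∈ univ) => hterm s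
  rw [← mul_sum, sum_add_distrib, sum_ite_eq', if_pos (mem_univ _), sum_sq_fourier,
    fourier_empty] at this
  linarith

theorem sharp_khintchine (a : ι → ℝ) :
    √(∑ i, a i ^ 2) ≤ √2 * 𝔼 ε : ι → ℤˣ, |∑ i, a i * (ε i : ℤ)| := by
  set S : (ι → ℤˣ) → ℝ := fun ε => ∑ i, a i * (ε i : ℤ) with hS
  have hsq : 𝔼 ε, |S ε| ^ 2 = ∑ i, a i ^ 2 := by
    simp_rw [sq_abs, hS, sq, sum_mul_sum, expect_sum_comm]
    simp_rw [show ∀ ε : ι → ℤˣ, ∀ i j, a i * ((ε i : ℤ) : ℝ) * (a j * (ε j : ℤ))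
      = a i * a j * ((ε i : ℤ) * (ε j : ℤ) : ℝ) from fun _ _ _ => by ring, ← mul_expect,
      expect_cast_mul_cast, mul_ite, mul_zero, sum_ite_eq]
    simp
  have heven : ∀ ε, |S (-ε)| = |S ε| := fun ε => by
    rw [← abs_neg (S ε)]
    simp [hS, sum_neg_distrib]
  have hgrad : ∀ i ε, (|S ε| - |S (ε * flip i)|) ^ 2 ≤ 4 * a i ^ 2 := by
    intro i ε
    have hdiff : S ε - S (ε * flip i) = 2 * (a i * (ε i : ℤ)) := by
      simp only [hS, ← sum_sub_distrib, cast_mul_flip_apply, mul_ite, sub_ite, sub_self,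
        sum_ite_eq', mem_univ, if_true]
      ring
    have h := abs_abs_sub_abs_le_abs_sub (S ε) (S (ε * flip i))
    rw [hdiff, abs_mul, abs_mul, abs_cast, mul_one, ← abs_mul] at h
    nlinarith [sq_le_sq.mpr h]
  have hgrad_sum : ∑ i, 𝔼 ε, (|S ε| - |S (ε * flip i)|) ^ 2 ≤ 4 * ∑ i, a i ^ 2 := by
    rw [mul_sum]
    exact sum_le_sum fun i _ => expect_le univ_nonempty fun ε _ => hgrad i ε
  have hpoinc := poincare_of_even (f := fun ε => |S ε|) heven
  rw [hsq] at hpoinc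
  calc √(∑ i, a i ^ 2) ≤ √(2 * (𝔼 ε, |S ε|) ^ 2) := Real.sqrt_le_sqrt (by linarith)
    _ = √2 * 𝔼 ε, |S ε| := by
      rw [Real.sqrt_mul zero_le_two, Real.sqrt_sq (expect_nonneg fun ε _ => abs_nonneg _)]

end BooleanCube

lemma sqrt_sum_sq_sum_le {α β : Type*} [Fintype α] [Fintype β] (g : α → β → ℝ) :
    √(∑ b, (∑ a, g a b) ^ 2) ≤ ∑ a, √(∑ b, g a b ^ 2) := by
  have h : ∀ x : β → ℝ, ‖WithLp.toLp 2 x‖ = √(∑ b, x b ^ 2) := fun x => by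
    simp [EuclideanSpace.norm_eq]
  simpa [h] using norm_sum_le univ fun a => WithLp.toLp 2 (g a)

lemma sqrt_sum_sq_expect_le {α β : Type*} [Fintype α] [Fintype β] (g : α → β → ℝ) :
    √(∑ b, (𝔼 a, g a b) ^ 2) ≤ 𝔼 a, √(∑ b, g a b ^ 2) := by
  simp only [Fintype.expect_eq_sum_div_card, div_pow, ← sum_div, Real.sqrt_div' _ (sq_nonneg _),
    Real.sqrt_sq (Nat.cast_nonneg _)]
  gcongr
  exact sqrt_sum_sq_sum_le g

lemma sum_pi_fin_succ {α β : Type*} [Fintype α] [AddCommMonoid β] {k : ℕ}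
    (g : (Fin (k + 1) → α) → β) : ∑ J, g J = ∑ j, ∑ v, g (Fin.cons j v) := by
  rw [← Fintype.sum_prod_type']
  exact (Fintype.sum_equiv (Fin.consEquiv fun _ => α) _ _ fun _ => rfl).symm

lemma expect_pi_fin_succ {α β : Type*} [Fintype α] [AddCommMonoid β] [Module ℚ≥0 β]
    {k : ℕ} (g : (Fin (k + 1) → α) → β) :
    𝔼 J, g J = 𝔼 j, 𝔼 v, g (Fin.cons j v) := by
  rw [← expect_product', univ_product_univ]
  exact (Fintype.expect_equiv (Fin.consEquiv fun _ => α) _ _ fun _ => rfl).symm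

def signVec {ι : Type*} (ε : ι → ℤˣ) : ι → ℝ := fun i => ((ε i : ℤ) : ℝ)

lemma norm_le_one_iff_forall_abs_le {ι : Type*} [Fintype ι] (x : ι → ℝ) :
    ‖x‖ ≤ 1 ↔ ∀ j, |x j| ≤ 1 := by
  simp [pi_norm_le_iff_of_nonneg]

lemma norm_signVec_le {ι : Type*} [Fintype ι] (ε : ι → ℤˣ) : ‖signVec ε‖ ≤ 1 :=
  (norm_le_one_iff_forall_abs_le _).mpr fun j => (BooleanCube.abs_cast (ε j)).le

lemma linearMap_apply_eq_sum_e {n : ℕ} {V : Type*} [AddCommMonoid V] [Module ℝ V]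
    (L : (Fin n → ℝ) →ₗ[ℝ] V) (x : Fin n → ℝ) : L x = ∑ j, x j • L (e n j) := by
  rw [L.pi_apply_eq_sum_univ x]
  refine sum_congr rfl fun j _ => ?_
  congr 2
  funext i
  simp [e, eq_comm]

lemma MultilinearMap.apply_comp_cons {k : ℕ} {α V W : Type*} [AddCommMonoid V] [Module ℝ V]
    [AddCommMonoid W] [Module ℝ W] (S : MultilinearMap ℝ (fun _ : Fin (k + 1) => V) W)
    (f : α → V) (a : α) (w : Fin k → α) :
    S (fun t => f (Fin.cons (α := fun _ => α) a w t)) = S.curryLeft (f a) (fun t => f (w t)) := by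
  rw [MultilinearMap.curryLeft_apply]
  congr 1
  funext t
  cases t using Fin.cases <;> simp

theorem khintchine_multilinear {n k : ℕ}
    (S : MultilinearMap ℝ (fun _ : Fin k => Fin n → ℝ) ℝ) :
    √(∑ J : Fin k → Fin n, S (fun t => e n (J t)) ^ 2)
      ≤ √2 ^ k * 𝔼 E : Fin k → Fin n → ℤˣ, |S (fun t => signVec (E t))| := by
  induction k with
  | zero =>
    have h : ∀ (J : Fin 0 → Fin n) (E : Fin 0 → Fin n → ℤˣ),
        S (fun t => e n (J t)) = S (fun t => signVec (E t)) :=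
      fun J E => congr_arg S (Subsingleton.elim _ _)
    simp_rw [← h default]
    simp [Real.sqrt_sq_eq_abs]
  | succ k ih =>
    let S' (ε : Fin n → ℤˣ) := S.curryLeft (signVec ε)
    have hS' : ∀ ε E, S' ε (fun t => signVec (E t))
        = S (fun t => signVec (Fin.cons (α := fun _ => Fin n → ℤˣ) ε E t)) :=
      fun ε E => (MultilinearMap.apply_comp_cons S signVec ε E).symm
    have hszarek : ∀ v : Fin k → Fin n, √(∑ j, S (fun t => e n (Fin.cons j v t)) ^ 2)
        ≤ √2 * 𝔼 ε, |S' ε (fun t => e n (v t))| := by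
      intro v
      convert BooleanCube.sharp_khintchine fun j => S (fun t => e n (Fin.cons j v t)) using 4
      with ε
      simp only [S', MultilinearMap.apply_comp_cons,
        linearMap_apply_eq_sum_e S.curryLeft (signVec ε), _root_.sum_apply, _root_.smul_apply,
        signVec, smul_eq_mul, mul_comm]
    calc √(∑ J : Fin (k + 1) → Fin n, S (fun t => e n (J t)) ^ 2)
        = √(∑ v : Fin k → Fin n, √(∑ j, S (fun t => e n (Fin.cons j v t)) ^ 2) ^ 2) := by
          rw [sum_pi_fin_succ, sum_comm]
          simp_rw [Real.sq_sqrt (sum_nonneg fun _ _ => sq_nonneg _)]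
      _ ≤ √(∑ v : Fin k → Fin n, (√2 * 𝔼 ε, |S' ε (fun t => e n (v t))|) ^ 2) := by
          gcongr with v
          exact hszarek v
      _ = √2 * √(∑ v : Fin k → Fin n, (𝔼 ε, |S' ε (fun t => e n (v t))|) ^ 2) := by
          simp_rw [mul_pow, ← mul_sum, Real.sqrt_mul (sq_nonneg _),
            Real.sqrt_sq (Real.sqrt_nonneg _)]
      _ ≤ √2 * 𝔼 ε, √(∑ v : Fin k → Fin n, S' ε (fun t => e n (v t)) ^ 2) := by
          gcongr
          simpa only [sq_abs] using sqrt_sum_sq_expect_le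
            fun (ε : Fin n → ℤˣ) (v : Fin k → Fin n) => |S' ε (fun t => e n (v t))|
      _ ≤ √2 * 𝔼 ε, √2 ^ k * 𝔼 E : Fin k → Fin n → ℤˣ,
            |S' ε (fun t => signVec (E t))| :=
          mul_le_mul_of_nonneg_left (expect_le_expect fun ε _ => ih (S' ε)) (Real.sqrt_nonneg 2)
      _ = √2 ^ (k + 1) * 𝔼 E : Fin (k + 1) → Fin n → ℤˣ,
            |S (fun t => signVec (E t))| := by
          simp only [expect_pi_fin_succ, hS', ← mul_expect, pow_succ]
          ring

section SupNorm

variable {m n : ℕ} (T : MultilinearMap ℝ (fun _ : Fin m => Fin n → ℝ) ℝ)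

lemma MultilinearMap.apply_eq_sum_e (x : Fin m → Fin n → ℝ) :
    T x = ∑ J : Fin m → Fin n, (∏ i, x i (J i)) * T (fun i => e n (J i)) := by
  have hx : x = fun i => ∑ j, x i j • e n j :=
    funext fun i => by simpa using linearMap_apply_eq_sum_e LinearMap.id (x i)
  conv_lhs => rw [hx, T.map_sum]
  simp [T.map_smul_univ]

lemma abs_apply_le_sum {x : Fin m → Fin n → ℝ} (hx : ∀ i, ‖x i‖ ≤ 1) :
    |T x| ≤ ∑ J : Fin m → Fin n, |T (fun i => e n (J i))| := by
  rw [T.apply_eq_sum_e]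
  refine (abs_sum_le_sum_abs _ _).trans (sum_le_sum fun J _ => ?_)
  rw [abs_mul, Finset.abs_prod]
  refine mul_le_of_le_one_left (abs_nonneg _) (prod_le_one (fun _ _ => abs_nonneg _) fun i _ => ?_)
  exact (norm_le_one_iff_forall_abs_le _).mp (hx i) (J i)

lemma le_supNorm {x : Fin m → Fin n → ℝ} (hx : ∀ i, ‖x i‖ ≤ 1) :
    |T x| ≤ supNorm m n T :=
  le_csSup ⟨_, by rintro v ⟨y, hy, rfl⟩; exact abs_apply_le_sum T hy⟩ ⟨x, hx, rfl⟩

lemma supNorm_nonneg : 0 ≤ supNorm m n T :=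
  (abs_nonneg _).trans (le_supNorm T (x := 0) fun _ => by simp)

lemma supNorm_le {B : ℝ}
    (hB : ∀ x : Fin m → Fin n → ℝ, (∀ i, ‖x i‖ ≤ 1) → |T x| ≤ B) :
    supNorm m n T ≤ B :=
  csSup_le ⟨_, 0, fun _ => by simp, rfl⟩ (by rintro v ⟨x, hx, rfl⟩; exact hB x hx)

end SupNorm

lemma sum_abs_curryMid_le_supNorm {m n : ℕ}
    (T : MultilinearMap ℝ (fun _ : Fin (m + 1) => Fin n → ℝ) ℝ) (p : Fin (m + 1))
    {y : Fin m → Fin n → ℝ} (hy : ∀ t, ‖y t‖ ≤ 1) :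
    ∑ j, |T.curryMid p (e n j) y| ≤ supNorm (m + 1) n T := by
  set τ : Fin n → ℝ := fun j => SignType.sign (T.curryMid p (e n j) y)
  have hτ : ‖τ‖ ≤ 1 := (norm_le_one_iff_forall_abs_le τ).mpr fun j => by
    simp only [τ]
    cases SignType.sign (T.curryMid p (e n j) y) <;> simp
  calc ∑ j, |T.curryMid p (e n j) y| = T.curryMid p τ y := by
        rw [linearMap_apply_eq_sum_e (T.curryMid p) τ]
        simp [τ, _root_.sum_apply]
    _ ≤ |T (p.insertNth τ y)| := le_abs_self _
    _ ≤ supNorm (m + 1) n T := by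
        refine le_supNorm T ((Fin.forall_iff_succAbove p).mpr ⟨?_, fun i => ?_⟩)
        · simpa using hτ
        · simpa using hy i

section MixedNorm

variable {M n : ℕ} (T : MultilinearMap ℝ (fun _ : Fin (M + 2) => Fin n → ℝ) ℝ)

noncomputable def mixedNorm : ℝ :=
  √(∑ j₁ : Fin n, (∑ j₂ : Fin n, √(∑ v : Fin M → Fin n,
      T (fun k => e n (Fin.cons (α := fun _ => Fin n) j₁
        (Fin.cons (α := fun _ => Fin n) j₂ v) k)) ^ 2)) ^ 2)

lemma apply_e_cons_cons (j₁ j₂ : Fin n) (v : Fin M → Fin n) :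
    T (fun k => e n (Fin.cons (α := fun _ => Fin n) j₁
        (Fin.cons (α := fun _ => Fin n) j₂ v) k)) =
      T.curryMid 1 (e n j₂) (fun t => e n (Fin.cons (α := fun _ => Fin n) j₁ v t)) := by
  have hcons : ∀ {k} (a : Fin n) (w : Fin k → Fin n),
      (fun t => e n (Fin.cons (α := fun _ => Fin n) a w t)) =
        Fin.cons (e n a) fun t => e n (w t) :=
    fun a w => Fin.comp_cons (e n) a w
  rw [MultilinearMap.curryMid_apply_apply, ← Fin.succ_zero_eq_one]
  simp only [hcons, Fin.insertNth_succ_cons, Fin.insertNth_zero']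

theorem mixedNorm_le_supNorm : mixedNorm T ≤ √2 ^ (M + 1) * supNorm (M + 2) n T := by
  set S : Fin n → MultilinearMap ℝ (fun _ : Fin (M + 1) => Fin n → ℝ) ℝ :=
    fun j => T.curryMid 1 (e n j)
  calc mixedNorm T
      = √(∑ j₁ : Fin n, (∑ j₂ : Fin n, √(∑ v : Fin M → Fin n,
          S j₂ (fun t => e n (Fin.cons (α := fun _ => Fin n) j₁ v t)) ^ 2)) ^ 2) := by
        simp only [mixedNorm, apply_e_cons_cons, S]
    _ ≤ ∑ j₂ : Fin n, √(∑ u : Fin (M + 1) → Fin n,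
          S j₂ (fun t => e n (u t)) ^ 2) := by
        refine (sqrt_sum_sq_sum_le _).trans_eq (sum_congr rfl fun j₂ _ => ?_)
        rw [sum_pi_fin_succ]
        simp_rw [Real.sq_sqrt (sum_nonneg fun _ _ => sq_nonneg _)]
    _ ≤ ∑ j₂ : Fin n, √2 ^ (M + 1) * 𝔼 E : Fin (M + 1) → Fin n → ℤˣ,
          |S j₂ (fun t => signVec (E t))| :=
        sum_le_sum fun j₂ _ => khintchine_multilinear (S j₂)
    _ = √2 ^ (M + 1) * 𝔼 E : Fin (M + 1) → Fin n → ℤˣ,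
          ∑ j₂, |S j₂ (fun t => signVec (E t))| := by
        rw [← mul_sum, expect_sum_comm]
    _ ≤ √2 ^ (M + 1) * supNorm (M + 2) n T := by
        gcongr
        exact expect_le univ_nonempty fun E _ =>
          sum_abs_curryMid_le_supNorm T 1 fun t => norm_signVec_le (E t)

end MixedNorm

section Witness

variable {M N : ℕ} (enc : (Fin (M + 1) → ℤˣ) ≃ Fin N) (p q : Fin N)

def hadamardForm (u : ℤˣ) : (Fin N → ℝ) →ₗ[ℝ] ℝ :=
  LinearMap.proj p + ((u : ℤ) : ℝ) • LinearMap.proj q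

lemma hadamardForm_apply (u : ℤˣ) (y : Fin N → ℝ) :
    hadamardForm p q u y = y p + (u : ℤ) * y q := rfl

lemma sum_abs_hadamardForm_le {y : Fin N → ℝ} (hy : ‖y‖ ≤ 1) :
    ∑ u, |hadamardForm p q u y| ≤ 2 := by
  have hp := (norm_le_one_iff_forall_abs_le y).mp hy p
  have hq := (norm_le_one_iff_forall_abs_le y).mp hy q
  rw [abs_le] at hp hq
  rw [UnitsInt.univ, sum_pair (by decide)]
  simp only [hadamardForm_apply, Units.val_one, Units.val_neg, Int.cast_one, Int.cast_neg, one_mul,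
    neg_one_mul, ← sub_eq_add_neg]
  rcases abs_cases (y p + y q) with h | h <;> rcases abs_cases (y p - y q) with h' | h' <;>
    linarith

lemma abs_hadamardForm_e {p q : Fin N} (hpq : p ≠ q) (u : ℤˣ) (j : Fin N) :
    |hadamardForm p q u (e N j)| = (if j = p then 1 else 0) + (if j = q then 1 else 0) := by
  by_cases hjp : j = p
  · subst hjp; simp [hadamardForm_apply, e, hpq, Ne.symm hpq]
  · by_cases hjq : j = q
    · subst hjq; simp [hadamardForm_apply, e, hjp, Ne.symm hjp, BooleanCube.abs_cast]
    · simp [hadamardForm_apply, e, hjp, hjq, Ne.symm hjp, Ne.symm hjq]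

def extremalForm : MultilinearMap ℝ (fun _ : Fin (M + 2) => Fin N → ℝ) ℝ :=
  LinearMap.uncurryMid 1 (∑ b, (LinearMap.proj (enc b)).smulRight
    ((MultilinearMap.mkPiAlgebra ℝ (Fin (M + 1)) ℝ).compLinearMap
      fun s => hadamardForm p q (b s)))

lemma curryMid_extremalForm_apply (z : Fin N → ℝ) (y : Fin (M + 1) → Fin N → ℝ) :
    (extremalForm enc p q).curryMid 1 z y =
      ∑ b, z (enc b) * ∏ s, hadamardForm p q (b s) (y s) := by
  simp [extremalForm, _root_.sum_apply]

lemma extremalForm_apply (x : Fin (M + 2) → Fin N → ℝ) :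
    extremalForm enc p q x =
      ∑ b, x 1 (enc b) * ∏ s, hadamardForm p q (b s) (Fin.removeNth 1 x s) := by
  simp [extremalForm, _root_.sum_apply]

theorem supNorm_extremalForm_le : supNorm (M + 2) N (extremalForm enc p q) ≤ 2 ^ (M + 1) := by
  refine supNorm_le _ fun x hx => ?_
  rw [extremalForm_apply]
  calc |∑ b, x 1 (enc b) * ∏ s, hadamardForm p q (b s) (Fin.removeNth 1 x s)|
      ≤ ∑ b : Fin (M + 1) → ℤˣ, ∏ s, |hadamardForm p q (b s) (Fin.removeNth 1 x s)| := by
        refine (abs_sum_le_sum_abs _ _).trans (sum_le_sum fun b _ => ?_)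
        rw [abs_mul, abs_prod]
        exact mul_le_of_le_one_left (by positivity)
          ((norm_le_one_iff_forall_abs_le _).mp (hx 1) (enc b))
    _ = ∏ s, ∑ u, |hadamardForm p q u (Fin.removeNth 1 x s)| :=
        (Fintype.prod_sum fun s u => |hadamardForm p q u (Fin.removeNth 1 x s)|).symm
    _ ≤ ∏ _s : Fin (M + 1), (2 : ℝ) :=
        prod_le_prod (fun _ _ => sum_nonneg fun _ _ => abs_nonneg _)
          fun s _ => sum_abs_hadamardForm_le p q (hx _)
    _ = 2 ^ (M + 1) := by simp

theorem mixedNorm_extremalForm (hpq : p ≠ q) :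
    mixedNorm (extremalForm enc p q) = N * √2 ^ (M + 1) := by
  set ind : Fin N → ℝ := fun j => (if j = p then 1 else 0) + (if j = q then 1 else 0)
  have hind : ∀ j, ind j ^ 2 = ind j := fun j => by
    by_cases hjp : j = p
    · subst hjp; simp [ind, hpq]
    · by_cases hjq : j = q
      · subst hjq; simp [ind, hjp]
      · simp [ind, hjp, hjq]
  have hsum : ∑ j, ind j = 2 := by 
    simp only [ind, sum_add_distrib, sum_ite_eq', mem_univ, ↓reduceIte]
    norm_num
  have hcoef : ∀ j₂ (u : Fin (M + 1) → Fin N),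
      (extremalForm enc p q).curryMid 1 (e N j₂) (fun t => e N (u t)) ^ 2 = ∏ s, ind (u s) := by
    intro j₂ u
    rw [curryMid_extremalForm_apply, ← sq_abs]
    simp only [e, ite_mul, one_mul, zero_mul, ← Equiv.eq_symm_apply, sum_ite_eq',
      mem_univ, if_true, abs_prod, abs_hadamardForm_e hpq, ← prod_pow]
    exact prod_congr rfl fun s _ => hind (u s)
  have hinner : ∀ j₁ : Fin N,
      ∑ v : Fin M → Fin N, ∏ s, ind (Fin.cons (α := fun _ => Fin N) j₁ v s) =
        ind j₁ * 2 ^ M := by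
    intro j₁
    simp only [Fin.prod_univ_succ, Fin.cons_zero, Fin.cons_succ, ← mul_sum, ← hsum,
      Fintype.sum_pow]
  have hind0 : ∀ j, 0 ≤ ind j := fun j => by positivity
  simp only [mixedNorm, apply_e_cons_cons, hcoef, hinner, sum_const, card_univ, Fintype.card_fin,
    nsmul_eq_mul, mul_pow, Real.sq_sqrt (mul_nonneg (hind0 _) (pow_nonneg zero_le_two M))]
  have htwo : (2 : ℝ) ^ (M + 1) = (√2 ^ (M + 1)) ^ 2 := by
    rw [← pow_mul, mul_comm, pow_mul, Real.sq_sqrt zero_le_two]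
  rw [← mul_sum, ← sum_mul, hsum, ← pow_succ', htwo, ← mul_pow,
    Real.sqrt_sq (by positivity)]

end Witness

theorem exists_extremalForm (M : ℕ) :
    ∃ (n : ℕ) (L : MultilinearMap ℝ (fun _ : Fin (M + 2) => Fin n → ℝ) ℝ),
      supNorm (M + 2) n L ≤ 2 ^ (M + 1) ∧ mixedNorm L = 2 ^ (M + 1) * √2 ^ (M + 1) := by
  let enc : (Fin (M + 1) → ℤˣ) ≃ Fin (2 ^ (M + 1)) := Fintype.equivFinOfCardEq (by simp)
  have h0 : 0 < 2 ^ (M + 1) := by positivity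
  have h1 : 1 < 2 ^ (M + 1) := Nat.one_lt_two_pow (by omega)
  refine ⟨_, extremalForm enc ⟨0, h0⟩ ⟨1, h1⟩, supNorm_extremalForm_le enc _ _, ?_⟩
  rw [mixedNorm_extremalForm enc _ _ (by simp [Fin.ext_iff])]
  push_cast
  rfl

/-- For the multiple exponent `(2,1,2,...,2)` (with `m = M + 2` entries), the
optimal constant of the real mixed `(ℓ₁,ℓ₂)`-Littlewood inequality — the least
`C` such that
`(Σ_{j₁}(Σ_{j₂}(Σ_{j₃,...,j_m}|T(e_{j₁},...,e_{j_m})|²)^{1/2})²)^{1/2} ≤ C‖T‖`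
for all real `m`-linear forms on `(ℓ∞ⁿ)^m` and all `n` — is `2^{(m-1)/2}`. -/
theorem stmt_13 (M : ℕ) :
    IsLeast {C : ℝ |
        ∀ n : ℕ, ∀ T : MultilinearMap ℝ (fun _ : Fin (M + 2) => (Fin n → ℝ)) ℝ,
          (∑ j₁ : Fin n, (∑ j₂ : Fin n, (∑ idx : Fin M → Fin n,
              |T fun k => e n (Fin.cons (α := fun _ => Fin n) j₁
                  (Fin.cons (α := fun _ => Fin n) j₂ idx) k)| ^ 2) ^ ((1:ℝ)/2)) ^ 2)
              ^ ((1:ℝ)/2)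
            ≤ C * supNorm (M + 2) n T}
      ((2:ℝ) ^ (((M : ℝ) + 1) / 2)) := by
  have hconst : (2 : ℝ) ^ (((M : ℝ) + 1) / 2) = √2 ^ (M + 1) := by
    rw [Real.sqrt_eq_rpow, ← Real.rpow_natCast, ← Real.rpow_mul zero_le_two]
    push_cast
    ring_nf
  simp only [← Real.sqrt_eq_rpow, sq_abs, hconst]
  refine ⟨fun n T => mixedNorm_le_supNorm T, fun C hC => ?_⟩
  obtain ⟨n, L, hsup, hL⟩ := exists_extremalForm M
  have h : mixedNorm L ≤ C * supNorm (M + 2) n L := hC n L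
  rw [hL] at h
  have hpos : (0 : ℝ) < 2 ^ (M + 1) * √2 ^ (M + 1) := by positivity
  have hC0 : 0 ≤ C := by
    by_contra! hC0
    nlinarith [mul_nonpos_of_nonpos_of_nonneg hC0.le (supNorm_nonneg L)]
  nlinarith [h.trans (mul_le_mul_of_nonneg_left hsup hC0)]
end

section
/- For any finitely supported nonnegative doubly-indexed array (a_{ij}) and exponents with 1/q = θ/r + (1-θ)/s coordinatewise for mixed norms q = (q₁,q₂), r = (r₁,r₂), s = (s₁,s₂) in [1,∞)², the mixed norm satisfies ‖a‖_{(q₁,q₂)} ≤ ‖a‖_{(r₁,r₂)}^θ · ‖a‖_{(s₁,s₂)}^{1-θ}, where ‖a‖_{(p₁,p₂)} = (Σᵢ(Σⱼ a_{ij}^{p₂})^{p₁/p₂})^{1/p₁}. -/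
/-!
Write `‖f‖_p = (∑ i, f i ^ p) ^ (1 / p)`. Hölder's inequality with the exponents `r / θ` and
`p / (1 - θ)`, whose reciprocals add up to `1 / q`, gives
`‖f ^ θ * g ^ (1 - θ)‖_q ≤ ‖f‖_r ^ θ * ‖g‖_p ^ (1 - θ)`.
Taking `f = g = a i` bounds each row norm `‖a i‖_{q₂}` by `‖a i‖_{r₂} ^ θ * ‖a i‖_{s₂} ^ (1 - θ)`;
since `‖·‖_{q₁}` is monotone on nonnegative vectors, applying the same inequality to the two
vectors of row norms finishes the proof.
-/

namespace Finset

variable {ι : Type*} (s : Finset ι)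

noncomputable def lpNorm (p : ℝ) (f : ι → ℝ) : ℝ := (∑ i ∈ s, f i ^ p) ^ (1 / p)

variable {s}

lemma lpNorm_nonneg {p : ℝ} {f : ι → ℝ} (hf : ∀ i ∈ s, 0 ≤ f i) : 0 ≤ s.lpNorm p f :=
  Real.rpow_nonneg (sum_nonneg fun i hi => Real.rpow_nonneg (hf i hi) _) _

lemma lpNorm_mono {p : ℝ} (hp : 0 < p) {f g : ι → ℝ} (hf : ∀ i ∈ s, 0 ≤ f i)
    (hfg : ∀ i ∈ s, f i ≤ g i) : s.lpNorm p f ≤ s.lpNorm p g := by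
  refine Real.rpow_le_rpow (sum_nonneg fun i hi => Real.rpow_nonneg (hf i hi) _) ?_ (by positivity)
  exact sum_le_sum fun i hi => Real.rpow_le_rpow (hf i hi) (hfg i hi) hp.le

lemma lpNorm_rpow {p t : ℝ} (hp : 0 < p) (ht : 0 < t) {f : ι → ℝ} (hf : ∀ i ∈ s, 0 ≤ f i) :
    s.lpNorm (p / t) (fun i => f i ^ t) = s.lpNorm p f ^ t := by
  have hsum : 0 ≤ ∑ i ∈ s, f i ^ p := sum_nonneg fun i hi => Real.rpow_nonneg (hf i hi) _
  have hpow : ∀ i ∈ s, (f i ^ t) ^ (p / t) = f i ^ p := fun i hi => by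
    rw [← Real.rpow_mul (hf i hi), mul_div_cancel₀ _ ht.ne']
  rw [lpNorm, lpNorm, sum_congr rfl hpow, ← Real.rpow_mul hsum]
  congr 1
  field_simp

theorem lpNorm_mul_le {p q r : ℝ} (hpqr : p.HolderTriple q r) {f g : ι → ℝ}
    (hf : ∀ i ∈ s, 0 ≤ f i) (hg : ∀ i ∈ s, 0 ≤ g i) :
    s.lpNorm r (fun i => f i * g i) ≤ s.lpNorm p f * s.lpNorm q g := by
  obtain ⟨hp, hq, hr⟩ := hpqr.all_pos
  have hF : 0 ≤ ∑ i ∈ s, f i ^ p := sum_nonneg fun i hi => Real.rpow_nonneg (hf i hi) _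
  have hG : 0 ≤ ∑ i ∈ s, g i ^ q := sum_nonneg fun i hi => Real.rpow_nonneg (hg i hi) _
  calc s.lpNorm r (fun i => f i * g i)
      ≤ ((∑ i ∈ s, f i ^ p) ^ (r / p) * (∑ i ∈ s, g i ^ q) ^ (r / q)) ^ (1 / r) :=
        Real.rpow_le_rpow
          (sum_nonneg fun i hi => Real.rpow_nonneg (mul_nonneg (hf i hi) (hg i hi)) _)
          (Real.Lr_rpow_le_Lp_mul_Lq_of_nonneg s hpqr hf hg) (by positivity)
    _ = s.lpNorm p f * s.lpNorm q g := by
        rw [Real.mul_rpow (by positivity) (by positivity), ← Real.rpow_mul hF, ← Real.rpow_mul hG,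
          lpNorm, lpNorm]
        field_simp

theorem lpNorm_rpow_mul_rpow_le {θ p q r : ℝ} (hθ : θ ∈ Set.Icc (0 : ℝ) 1) (hp : 0 < p)
    (hr : 0 < r) (hpqr : 1 / q = θ / r + (1 - θ) / p) {f g : ι → ℝ}
    (hf : ∀ i ∈ s, 0 ≤ f i) (hg : ∀ i ∈ s, 0 ≤ g i) :
    s.lpNorm q (fun i => f i ^ θ * g i ^ (1 - θ)) ≤ s.lpNorm r f ^ θ * s.lpNorm p g ^ (1 - θ) := by
  obtain ⟨hθ0, hθ1⟩ := hθ
  rcases hθ0.eq_or_lt with rfl | hθ0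
  · obtain rfl : q = p := by simpa using hpqr
    simp
  rcases hθ1.eq_or_lt with rfl | hθ1
  · obtain rfl : q = r := by simpa using hpqr
    simp
  have htriple : (r / θ).HolderTriple (p / (1 - θ)) q := by
    refine ⟨?_, by positivity, div_pos hp (sub_pos.2 hθ1)⟩
    rw [inv_div, inv_div, inv_eq_one_div, hpqr]
  calc s.lpNorm q (fun i => f i ^ θ * g i ^ (1 - θ))
      ≤ s.lpNorm (r / θ) (fun i => f i ^ θ) * s.lpNorm (p / (1 - θ)) (fun i => g i ^ (1 - θ)) :=
        lpNorm_mul_le htriple (fun i hi => Real.rpow_nonneg (hf i hi) _)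
          (fun i hi => Real.rpow_nonneg (hg i hi) _)
    _ = s.lpNorm r f ^ θ * s.lpNorm p g ^ (1 - θ) := by
        rw [lpNorm_rpow hr hθ0 hf, lpNorm_rpow hp (sub_pos.2 hθ1) hg]

theorem lpNorm_le_rpow_mul_rpow {θ p q r : ℝ} (hθ : θ ∈ Set.Icc (0 : ℝ) 1) (hp : 0 < p)
    (hr : 0 < r) (hpqr : 1 / q = θ / r + (1 - θ) / p) {f : ι → ℝ}
    (hf : ∀ i ∈ s, 0 ≤ f i) :
    s.lpNorm q f ≤ s.lpNorm r f ^ θ * s.lpNorm p f ^ (1 - θ) := by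
  have hsplit : ∀ i ∈ s, f i ^ θ * f i ^ (1 - θ) = f i := fun i hi => by
    rw [← Real.rpow_add' (hf i hi) (by simp), add_sub_cancel, Real.rpow_one]
  simpa only [lpNorm, sum_congr rfl fun i hi => congrArg (· ^ q) (hsplit i hi)] using
    lpNorm_rpow_mul_rpow_le hθ hp hr hpqr hf hf

lemma lpNorm_lpNorm {κ : Type*} {t : Finset κ} {p₁ p₂ : ℝ} {a : ι → κ → ℝ}
    (ha : ∀ i ∈ s, ∀ j ∈ t, 0 ≤ a i j) :
    s.lpNorm p₁ (fun i => t.lpNorm p₂ (a i)) =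
      (∑ i ∈ s, (∑ j ∈ t, a i j ^ p₂) ^ (p₁ / p₂)) ^ (1 / p₁) := by
  unfold lpNorm
  congr 1
  refine sum_congr rfl fun i hi => ?_
  rw [← Real.rpow_mul (sum_nonneg fun j hj => Real.rpow_nonneg (ha i hi j hj) _), one_div_mul_eq_div]

end Finset

open Finset

theorem stmt_19_general (I J : ℕ) (a : Fin I → Fin J → ℝ) (ha : ∀ i j, 0 ≤ a i j)
    (θ : ℝ) (hθ : θ ∈ Set.Icc (0:ℝ) 1)
    (q₁ q₂ r₁ r₂ s₁ s₂ : ℝ)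
    (hq₁ : 1 ≤ q₁) (hr₁ : 1 ≤ r₁) (hr₂ : 1 ≤ r₂)
    (hs₁ : 1 ≤ s₁) (hs₂ : 1 ≤ s₂)
    (h1 : 1 / q₁ = θ / r₁ + (1 - θ) / s₁)
    (h2 : 1 / q₂ = θ / r₂ + (1 - θ) / s₂) :
    (∑ i, (∑ j, a i j ^ q₂) ^ (q₁ / q₂)) ^ (1 / q₁)
      ≤ ((∑ i, (∑ j, a i j ^ r₂) ^ (r₁ / r₂)) ^ (1 / r₁)) ^ θ
          * ((∑ i, (∑ j, a i j ^ s₂) ^ (s₁ / s₂)) ^ (1 / s₁)) ^ (1 - θ) := by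
  have ha' : ∀ i ∈ univ, ∀ j ∈ univ, 0 ≤ a i j := fun i _ j _ => ha i j
  have hrow : ∀ p, ∀ i ∈ univ, 0 ≤ univ.lpNorm p (a i) := fun p i _ =>
    lpNorm_nonneg fun j _ => ha i j
  rw [← lpNorm_lpNorm ha', ← lpNorm_lpNorm ha', ← lpNorm_lpNorm ha']
  calc univ.lpNorm q₁ (fun i => univ.lpNorm q₂ (a i))
      ≤ univ.lpNorm q₁ (fun i => univ.lpNorm r₂ (a i) ^ θ * univ.lpNorm s₂ (a i) ^ (1 - θ)) :=
        lpNorm_mono (by positivity) (hrow q₂) fun i _ =>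
          lpNorm_le_rpow_mul_rpow hθ (by positivity) (by positivity) h2 fun j _ => ha i j
    _ ≤ _ := lpNorm_rpow_mul_rpow_le hθ (by positivity) (by positivity) h1 (hrow r₂) (hrow s₂)

/-- Two-index mixed-norm interpolation: for a nonnegative array `a` and mixed
exponents `q = (q₁,q₂)`, `r = (r₁,r₂)`, `s = (s₁,s₂)` in `[1,∞)²` with
`1/qᵢ = θ/rᵢ + (1-θ)/sᵢ`, one has
`‖a‖_{(q₁,q₂)} ≤ ‖a‖_{(r₁,r₂)}^θ · ‖a‖_{(s₁,s₂)}^{1-θ}`, where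
`‖a‖_{(p₁,p₂)} = (Σᵢ(Σⱼ aᵢⱼ^{p₂})^{p₁/p₂})^{1/p₁}`. -/
theorem stmt_19 (I J : ℕ) (a : Fin I → Fin J → ℝ) (ha : ∀ i j, 0 ≤ a i j)
    (θ : ℝ) (hθ : θ ∈ Set.Icc (0:ℝ) 1)
    (q₁ q₂ r₁ r₂ s₁ s₂ : ℝ)
    (hq₁ : 1 ≤ q₁) (hq₂ : 1 ≤ q₂) (hr₁ : 1 ≤ r₁) (hr₂ : 1 ≤ r₂)
    (hs₁ : 1 ≤ s₁) (hs₂ : 1 ≤ s₂)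
    (h1 : 1 / q₁ = θ / r₁ + (1 - θ) / s₁)
    (h2 : 1 / q₂ = θ / r₂ + (1 - θ) / s₂) :
    (∑ i, (∑ j, a i j ^ q₂) ^ (q₁ / q₂)) ^ (1 / q₁)
      ≤ ((∑ i, (∑ j, a i j ^ r₂) ^ (r₁ / r₂)) ^ (1 / r₁)) ^ θ
          * ((∑ i, (∑ j, a i j ^ s₂) ^ (s₁ / s₂)) ^ (1 / s₁)) ^ (1 - θ) :=
  stmt_19_general I J a ha θ hθ q₁ q₂ r₁ r₂ s₁ s₂ hq₁ hr₁ hr₂ hs₁ hs₂ h1 h2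
end
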